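/- Let R = ℂ[E₁,E₂] with the derivations e, f, h determined by e(E₁) = −2, e(E₂) = −E₁; f(E₁) = E₁² − 2E₂, f(E₂) = E₁E₂; h(E₁) = −2E₁, h(E₂) = −4E₂. Then, as ℂ-linear endomorphisms of R, these operators satisfy the 𝔰𝔩₂-relations [h,e] = 2e, [h,f] = −2f, [e,f] = h, so they equip R with the structure of an 𝔰𝔩₂-module algebra. -/

import Mathlib

/-!
The commutator of two derivations is again a derivation, and a derivation of a polynomial ring
is determined by its values on the variables. Each of the three relations is therefore an
identity between derivations that only has to be checked on `E₁` and `E₂`.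
-/

open MvPolynomial

theorem Derivation.map_ofNat {R A M : Type*} [CommSemiring R] [CommSemiring A] [AddCommMonoid M]
    [Algebra R A] [Module A M] [Module R M] (D : Derivation R A M) (n : ℕ) [n.AtLeastTwo] :
    D (ofNat(n) : A) = 0 :=
  D.map_natCast n

theorem MvPolynomial.toLinearMap_derivation_commutator_eq {σ R : Type*} [CommRing R]
    {D₁ D₂ D : Derivation R (MvPolynomial σ R) (MvPolynomial σ R)}
    (h : ∀ i, D₁ (D₂ (X i)) - D₂ (D₁ (X i)) = D (X i)) :
    D₁.toLinearMap * D₂.toLinearMap - D₂.toLinearMap * D₁.toLinearMap = D.toLinearMap := by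
  have hD : ⁅D₁, D₂⁆ = D := derivation_ext fun i => by rw [Derivation.commutator_apply, h]
  rw [← hD, Derivation.commutator_coe_linear_map, LieRing.of_associative_ring_bracket]

theorem sl2_relations_on_CE1E2
    (e f h : Derivation ℂ (MvPolynomial (Fin 2) ℂ) (MvPolynomial (Fin 2) ℂ))
    (he1 : e (X 0) = -2) (he2 : e (X 1) = -X 0)
    (hf1 : f (X 0) = X 0 ^ 2 - 2 * X 1) (hf2 : f (X 1) = X 0 * X 1)
    (hh1 : h (X 0) = -2 * X 0) (hh2 : h (X 1) = -4 * X 1) :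
    h.toLinearMap * e.toLinearMap - e.toLinearMap * h.toLinearMap = (2 : ℂ) • e.toLinearMap ∧
    h.toLinearMap * f.toLinearMap - f.toLinearMap * h.toLinearMap = (-2 : ℂ) • f.toLinearMap ∧
    e.toLinearMap * f.toLinearMap - f.toLinearMap * e.toLinearMap = h.toLinearMap := by
  simp only [← Derivation.coe_smul_linearMap]
  refine ⟨?_, ?_, ?_⟩ <;>
    refine toLinearMap_derivation_commutator_eq (Fin.forall_fin_two.2 ⟨?_, ?_⟩) <;>
    simp only [he1, he2, hf1, hf2, hh1, hh2, map_neg, map_sub, Derivation.leibniz,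
      Derivation.leibniz_pow, Derivation.map_ofNat, Derivation.coe_smul, Pi.smul_apply,
      smul_eq_mul, neg_smul, two_smul, Derivation.coe_add, Pi.add_apply, Nat.add_one_sub_one, pow_one] <;>
    ring
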